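/- arXiv:2309.17291 — 5 statements merged into one kernel-verified Lean document; each statement's English description precedes it below -/
import Mathlib

section
/- Let G be a finite simple graph and r a positive integer. If H is an r-correspondence-deletable subgraph of G, and H′ is a subgraph of G − V(H) that is r-correspondence-deletable in G − V(H), then the induced subgraph G[V(H) ∪ V(H′)] is an r-correspondence-deletable subgraph of G. -/
open SimpleGraph

/-- A correspondence assignment `(L, M)` for a graph `G` with colours in `C`:
a list assignment `L` giving each vertex a finite set of colours, together with,
for each edge `uv`, a partial matching `M u v` between `{u} × L u` and `{v} × L v`. -/
structure CorrAssignment {V : Type} (G : SimpleGraph V) (C : Type) : Type where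
  L : V → Finset C
  M : V → V → C → C → Prop
  adj_of_M : ∀ u v a b, M u v a b → G.Adj u v
  mem_left : ∀ u v a b, M u v a b → a ∈ L u
  mem_right : ∀ u v a b, M u v a b → b ∈ L v
  symm : ∀ u v a b, M u v a b → M v u b a
  match_right : ∀ u v a b b', M u v a b → M u v a b' → b = b'
  match_left : ∀ u v a a' b, M u v a b → M u v a' b → a = a'

/-- A `k`-correspondence assignment: every list has at least `k` colours. -/
def CorrAssignment.IsKAssignment {V C : Type} {G : SimpleGraph V}
    (LM : CorrAssignment G C) (k : ℕ) : Prop :=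
  ∀ v, k ≤ (LM.L v).card

/-- An `(L, M)`-colouring of `G`. -/
def CorrAssignment.IsColouring {V C : Type} {G : SimpleGraph V}
    (LM : CorrAssignment G C) (φ : V → C) : Prop :=
  (∀ v, φ v ∈ LM.L v) ∧ ∀ u v, G.Adj u v → ¬ LM.M u v (φ u) (φ v)

/-- An `(L, M)`-colouring of a subgraph `H` of `G` (with respect to the restriction of
`(L, M)` to `H`), recorded as a total function whose conditions concern only `H`. -/
def CorrAssignment.ColouringOn {V C : Type} {G : SimpleGraph V}
    (LM : CorrAssignment G C) (H : G.Subgraph) (φ : V → C) : Prop :=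
  (∀ v ∈ H.verts, φ v ∈ LM.L v) ∧ ∀ u v, H.Adj u v → ¬ LM.M u v (φ u) (φ v)

/-- The degree of `v` in `G`. -/
noncomputable def degree' {V : Type} (G : SimpleGraph V) (v : V) : ℕ :=
  Nat.card (G.neighborSet v)

/-- The (nonempty) induced subgraph of `G` on the vertex set `X` is
`r`-correspondence-deletable in `G`. -/
def Deletable {V : Type} (G : SimpleGraph V) (X : Set V) (r : ℕ) : Prop :=
  X.Nonempty ∧
  ∀ (C : Type) (LM : CorrAssignment (G.induce X) C),
    (∀ v : X, r - (degree' G ↑v - degree' (G.induce X) v) ≤ (LM.L v).card) →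
    ∃ φ : X → C, LM.IsColouring φ

/-- `G₀` (a subgraph of `G`) is `S`-critical with respect to the correspondence
assignment `(L, M)` for `G`: `S` is a proper subgraph of `G₀`, and for every proper
subgraph `G'` of `G₀` containing `S` there is an `(L, M)`-colouring of `S` that extends
to an `(L, M)`-colouring of `G'` but does not extend to an `(L, M)`-colouring of `G₀`. -/
def IsCriticalWrt {V C : Type} {G : SimpleGraph V} (LM : CorrAssignment G C)
    (G₀ S : G.Subgraph) : Prop :=
  S ≤ G₀ ∧ S ≠ G₀ ∧
  ∀ G' : G.Subgraph, S ≤ G' → G' ≤ G₀ → G' ≠ G₀ →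
    ∃ φ : V → C, LM.ColouringOn S φ ∧
      (∃ φ' : V → C, LM.ColouringOn G' φ' ∧ ∀ v ∈ S.verts, φ' v = φ v) ∧
      ¬ ∃ φ'' : V → C, LM.ColouringOn G₀ φ'' ∧ ∀ v ∈ S.verts, φ'' v = φ v

lemma degree'_induce {V : Type} (G : SimpleGraph V) (S : Set V) (v : ↥S) :
    degree' (G.induce S) v = ((G.neighborSet ↑v) ∩ S).ncard := by
  have h1 : (G.induce S).neighborSet v = Subtype.val ⁻¹' (G.neighborSet ↑v) := rfl
  rw [degree', Nat.card_coe_set_eq, h1,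
    ← Set.ncard_image_of_injective _ Subtype.val_injective,
    Subtype.image_preimage_coe, Set.inter_comm]

lemma degree'_eq {V : Type} (G : SimpleGraph V) (v : V) :
    degree' G v = (G.neighborSet v).ncard := by
  rw [degree', Nat.card_coe_set_eq]

lemma degree'_induce_induce {V : Type} (G : SimpleGraph V) (X : Set V)
    (Y : Set ↥(Xᶜ)) (y : ↥Y) :
    degree' ((G.induce Xᶜ).induce Y) y
      = (G.neighborSet (↑↑y) ∩ (Subtype.val '' Y)).ncard := by
  rw [degree'_induce, ← Set.ncard_image_of_injective _ Subtype.val_injective]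
  congr 1
  ext u
  constructor
  · rintro ⟨w, ⟨hw1, hw2⟩, rfl⟩
    exact ⟨hw1, ⟨w, hw2, rfl⟩⟩
  · rintro ⟨hu, w, hw, rfl⟩
    exact ⟨w, ⟨hu, hw⟩, rfl⟩

/-- If the induced subgraph of `G` on `X` is `r`-correspondence-deletable in
`G`, and the induced subgraph of `G − X` on `Y` is `r`-correspondence-deletable in `G − X`,
then the induced subgraph of `G` on `X ∪ Y` is `r`-correspondence-deletable in `G`. -/
theorem deletable_union {V : Type} [Fintype V] (G : SimpleGraph V) (r : ℕ) (hr : 0 < r)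
    (X : Set V) (hX : Deletable G X r)
    (Y : Set ↥(Xᶜ)) (hY : Deletable (G.induce Xᶜ) Y r) :
    Deletable G (X ∪ (Subtype.val '' Y)) r := by
  classical
  obtain ⟨hXne, hXcol⟩ := hX
  obtain ⟨-, hYcol⟩ := hY
  refine ⟨hXne.mono Set.subset_union_left, ?_⟩
  intro C LM hL
  have hY'X : Subtype.val '' Y ⊆ Xᶜ := by rintro u ⟨w, -, rfl⟩; exact w.prop
  have hdisj : Disjoint X (Subtype.val '' Y) := Set.disjoint_right.mpr fun u hu => hY'X hu
  -- embeddings into Z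
  have hzx : ∀ x : ↥X, (x : V) ∈ X ∪ Subtype.val '' Y := fun x => Set.mem_union_left _ x.prop
  have hzy : ∀ y : ↥Y, ((y : ↥Xᶜ) : V) ∈ X ∪ Subtype.val '' Y :=
    fun y => Set.mem_union_right _ ⟨↑y, y.prop, rfl⟩
  -- basic cardinality facts about neighbourhoods
  have a1 : ∀ v : V, (G.neighborSet v ∩ (X ∪ Subtype.val '' Y)).ncard
      = (G.neighborSet v ∩ X).ncard + (G.neighborSet v ∩ Subtype.val '' Y).ncard := by
    intro v
    rw [Set.inter_union_distrib_left]
    exact Set.ncard_union_eq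
      (hdisj.mono Set.inter_subset_right Set.inter_subset_right)
      (Set.toFinite _) (Set.toFinite _)
  have a2 : ∀ v : V, (G.neighborSet v).ncard
      = (G.neighborSet v ∩ X).ncard + (G.neighborSet v ∩ Xᶜ).ncard := by
    intro v
    conv_lhs => rw [← Set.inter_union_compl (G.neighborSet v) X]
    exact Set.ncard_union_eq
      (disjoint_compl_right.mono Set.inter_subset_right Set.inter_subset_right)
      (Set.toFinite _) (Set.toFinite _)
  have a3 : ∀ v : V, (G.neighborSet v ∩ Subtype.val '' Y).ncard ≤ (G.neighborSet v ∩ Xᶜ).ncard :=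
    fun v => Set.ncard_le_ncard (Set.inter_subset_inter_right _ hY'X) (Set.toFinite _)
  -- step 1: colour Y
  set LMY : CorrAssignment ((G.induce Xᶜ).induce Y) C :=
    { L := fun y => LM.L ⟨↑↑y, hzy y⟩
      M := fun u v a b => LM.M ⟨↑↑u, hzy u⟩ ⟨↑↑v, hzy v⟩ a b
      adj_of_M := fun u v a b h => by exact LM.adj_of_M ⟨↑↑u, hzy u⟩ ⟨↑↑v, hzy v⟩ a b h
      mem_left := fun u v a b h => LM.mem_left ⟨↑↑u, hzy u⟩ ⟨↑↑v, hzy v⟩ a b h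
      mem_right := fun u v a b h => LM.mem_right ⟨↑↑u, hzy u⟩ ⟨↑↑v, hzy v⟩ a b h
      symm := fun u v a b h => LM.symm ⟨↑↑u, hzy u⟩ ⟨↑↑v, hzy v⟩ a b h
      match_right := fun u v a b b' h h' =>
        LM.match_right ⟨↑↑u, hzy u⟩ ⟨↑↑v, hzy v⟩ a b b' h h'
      match_left := fun u v a a' b h h' =>
        LM.match_left ⟨↑↑u, hzy u⟩ ⟨↑↑v, hzy v⟩ a a' b h h' } with hLMY
  obtain ⟨φY, hφY⟩ := hYcol C LMY (by
    intro y
    have h0 := hL ⟨↑↑y, hzy y⟩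
    have e1 : degree' G ((⟨↑↑y, hzy y⟩ : ↥(X ∪ Subtype.val '' Y)) : V)
        = (G.neighborSet (↑↑y) ∩ X).ncard + (G.neighborSet (↑↑y) ∩ Xᶜ).ncard := by
      rw [degree'_eq]; exact a2 _
    have e2 : degree' (G.induce (X ∪ Subtype.val '' Y)) ⟨↑↑y, hzy y⟩
        = (G.neighborSet (↑↑y) ∩ X).ncard + (G.neighborSet (↑↑y) ∩ Subtype.val '' Y).ncard := by
      rw [degree'_induce]; exact a1 _
    have e3 : degree' (G.induce Xᶜ) ↑y = (G.neighborSet (↑↑y) ∩ Xᶜ).ncard :=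
      degree'_induce G Xᶜ ↑y
    have e4 := degree'_induce_induce G X Y y
    rw [e1, e2] at h0
    show r - (degree' (G.induce Xᶜ) ↑y - degree' ((G.induce Xᶜ).induce Y) y)
      ≤ (LM.L ⟨↑↑y, hzy y⟩).card
    rw [e3, e4]
    have := a3 (↑↑y : V)
    omega)
  -- forbidden colours for vertices of X
  set R : ↥X → Finset C := fun x =>
    (LM.L ⟨↑x, hzx x⟩).filter
      (fun b => ∃ yy : ↥Y, LM.M ⟨↑↑yy, hzy yy⟩ ⟨↑x, hzx x⟩ (φY yy) b) with hRdef
  have hRcard : ∀ x : ↥X, (R x).card ≤ (G.neighborSet ↑x ∩ Subtype.val '' Y).ncard := by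
    intro x
    rw [Set.ncard_eq_toFinset_card']
    refine Finset.card_le_card_of_injOn
      (f := fun b => if h : ∃ yy : ↥Y, LM.M ⟨↑↑yy, hzy yy⟩ ⟨↑x, hzx x⟩ (φY yy) b
        then ((h.choose : ↥Xᶜ) : V) else ↑x) ?_ ?_
    · intro b hb
      obtain ⟨-, hb2⟩ := Finset.mem_filter.mp hb
      beta_reduce
      rw [dif_pos hb2]
      have hspec := hb2.choose_spec
      have hadj : (G.induce (X ∪ Subtype.val '' Y)).Adj ⟨↑↑hb2.choose, hzy hb2.choose⟩ ⟨↑x, hzx x⟩ :=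
        LM.adj_of_M _ _ _ _ hspec
      rw [Finset.mem_coe, Set.mem_toFinset]
      exact ⟨hadj.symm, ⟨↑hb2.choose, hb2.choose.prop, rfl⟩⟩
    · intro b1 hb1 b2 hb2 hfe
      obtain ⟨-, h1⟩ := Finset.mem_filter.mp hb1
      obtain ⟨-, h2⟩ := Finset.mem_filter.mp hb2
      beta_reduce at hfe
      rw [dif_pos h1, dif_pos h2] at hfe
      have hy : h1.choose = h2.choose := Subtype.ext (Subtype.ext hfe)
      have hs1 := h1.choose_spec
      have hs2 := h2.choose_spec
      rw [hy] at hs1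
      exact LM.match_right _ _ _ _ _ hs1 hs2
  -- step 2: colour X with reduced lists
  set LMX : CorrAssignment (G.induce X) C :=
    { L := fun x => LM.L ⟨↑x, hzx x⟩ \ R x
      M := fun u v a b => LM.M ⟨↑u, hzx u⟩ ⟨↑v, hzx v⟩ a b ∧
        a ∈ LM.L ⟨↑u, hzx u⟩ \ R u ∧ b ∈ LM.L ⟨↑v, hzx v⟩ \ R v
      adj_of_M := fun u v a b h => by exact LM.adj_of_M ⟨↑u, hzx u⟩ ⟨↑v, hzx v⟩ a b h.1
      mem_left := fun u v a b h => h.2.1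
      mem_right := fun u v a b h => h.2.2
      symm := fun u v a b h =>
        ⟨LM.symm ⟨↑u, hzx u⟩ ⟨↑v, hzx v⟩ a b h.1, h.2.2, h.2.1⟩
      match_right := fun u v a b b' h h' =>
        LM.match_right ⟨↑u, hzx u⟩ ⟨↑v, hzx v⟩ a b b' h.1 h'.1
      match_left := fun u v a a' b h h' =>
        LM.match_left ⟨↑u, hzx u⟩ ⟨↑v, hzx v⟩ a a' b h.1 h'.1 } with hLMX
  obtain ⟨φX, hφX⟩ := hXcol C LMX (by
    intro x
    have h0 := hL ⟨↑x, hzx x⟩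
    have e1 : degree' G ((⟨↑x, hzx x⟩ : ↥(X ∪ Subtype.val '' Y)) : V)
        = (G.neighborSet (↑x) ∩ X).ncard + (G.neighborSet (↑x) ∩ Xᶜ).ncard := by
      rw [degree'_eq]; exact a2 _
    have e2 : degree' (G.induce (X ∪ Subtype.val '' Y)) ⟨↑x, hzx x⟩
        = (G.neighborSet (↑x) ∩ X).ncard + (G.neighborSet (↑x) ∩ Subtype.val '' Y).ncard := by
      rw [degree'_induce]; exact a1 _
    have e3 : degree' (G.induce X) x = (G.neighborSet (↑x) ∩ X).ncard :=
      degree'_induce G X x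
    have hsub : (LM.L ⟨↑x, hzx x⟩).card
        ≤ ((LM.L ⟨↑x, hzx x⟩ \ R x).card + (R x).card) := by
      refine le_trans (Finset.card_le_card ?_) (Finset.card_union_le _ _)
      intro b hb
      by_cases h : b ∈ R x
      · exact Finset.mem_union_right _ h
      · exact Finset.mem_union_left _ (Finset.mem_sdiff.mpr ⟨hb, h⟩)
    have hRc := hRcard x
    have hYXc := a3 (↑x : V)
    rw [e1, e2] at h0
    show r - (degree' G ↑x - degree' (G.induce X) x)
      ≤ (LM.L ⟨↑x, hzx x⟩ \ R x).card
    have e5 : degree' G ↑x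
        = (G.neighborSet (↑x) ∩ X).ncard + (G.neighborSet (↑x) ∩ Xᶜ).ncard := by
      rw [degree'_eq]; exact a2 _
    rw [e3, e5]
    omega)
  -- assemble the colouring of Z
  have hmemc : ∀ z : ↥(X ∪ Subtype.val '' Y), (z : V) ∉ X → (z : V) ∈ Xᶜ := fun z h =>
    hY'X (Or.resolve_left z.prop h)
  have hmemY : ∀ (z : ↥(X ∪ Subtype.val '' Y)) (h : (z : V) ∉ X), (⟨(z : V), hmemc z h⟩ : ↥Xᶜ) ∈ Y := by
    intro z h
    obtain ⟨w, hw, hwv⟩ := Or.resolve_left z.prop h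
    have he : (⟨(z : V), hmemc z h⟩ : ↥Xᶜ) = w := Subtype.ext hwv.symm
    rw [he]; exact hw
  refine ⟨fun z => if h : (z : V) ∈ X then φX ⟨z, h⟩
    else φY ⟨⟨z, hmemc z h⟩, hmemY z h⟩, ?_, ?_⟩
  · intro z
    beta_reduce
    by_cases h : (z : V) ∈ X
    · rw [dif_pos h]
      exact (Finset.mem_sdiff.mp (hφX.1 ⟨z, h⟩)).1
    · rw [dif_neg h]
      exact hφY.1 ⟨⟨z, hmemc z h⟩, hmemY z h⟩
  · intro u v hadj hM
    beta_reduce at hM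
    by_cases hu : (u : V) ∈ X <;> by_cases hv : (v : V) ∈ X
    · rw [dif_pos hu, dif_pos hv] at hM
      exact hφX.2 ⟨u, hu⟩ ⟨v, hv⟩ hadj ⟨hM, hφX.1 ⟨u, hu⟩, hφX.1 ⟨v, hv⟩⟩
    · rw [dif_pos hu, dif_neg hv] at hM
      have hmemX := hφX.1 ⟨u, hu⟩
      have hR : φX ⟨u, hu⟩ ∈ R ⟨u, hu⟩ :=
        Finset.mem_filter.mpr ⟨LM.mem_left _ _ _ _ hM,
          ⟨⟨⟨v, hmemc v hv⟩, hmemY v hv⟩, LM.symm _ _ _ _ hM⟩⟩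
      exact (Finset.mem_sdiff.mp hmemX).2 hR
    · rw [dif_neg hu, dif_pos hv] at hM
      have hmemX := hφX.1 ⟨v, hv⟩
      have hR : φX ⟨v, hv⟩ ∈ R ⟨v, hv⟩ :=
        Finset.mem_filter.mpr ⟨LM.mem_right _ _ _ _ hM,
          ⟨⟨⟨u, hmemc u hu⟩, hmemY u hu⟩, hM⟩⟩
      exact (Finset.mem_sdiff.mp hmemX).2 hR
    · rw [dif_neg hu, dif_neg hv] at hM
      exact hφY.2 ⟨⟨u, hmemc u hu⟩, hmemY u hu⟩ ⟨⟨v, hmemc v hv⟩, hmemY v hv⟩ hadj hM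
end

section
/- Let G be a finite simple graph and r a positive integer. If H is an r-correspondence-deletable subgraph of G that is maximal with respect to vertex-set inclusion among all r-correspondence-deletable subgraphs of G, then no nonempty induced subgraph of G − V(H) is r-correspondence-deletable in G − V(H). -/
open SimpleGraph

lemma deg_induce {V : Type} (G : SimpleGraph V) (S : Set V) (u : ↥S) :
    degree' (G.induce S) u = (G.neighborSet ↑u ∩ S).ncard := by
  have h1 : (G.induce S).neighborSet u = Subtype.val ⁻¹' (G.neighborSet ↑u) := by
    ext w
    simp [SimpleGraph.neighborSet]
  rw [degree', h1, Nat.card_coe_set_eq,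
    ← Set.ncard_image_of_injective _ Subtype.val_injective,
    Set.image_preimage_eq_inter_range, Subtype.range_coe]

lemma deg_plain {V : Type} (G : SimpleGraph V) (u : V) :
    degree' G u = (G.neighborSet u).ncard := by rw [degree', Nat.card_coe_set_eq]

lemma deg_induce2 {V : Type} (G : SimpleGraph V) (S : Set V) (T : Set ↥S) (w : ↥T) :
    degree' ((G.induce S).induce T) w = (G.neighborSet ↑↑w ∩ (Subtype.val '' T)).ncard := by
  rw [deg_induce, ← Set.ncard_image_of_injective _ Subtype.val_injective]
  congr 1
  ext x
  constructor
  · rintro ⟨x', ⟨h1, h2⟩, rfl⟩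
    exact ⟨by simpa [SimpleGraph.neighborSet] using h1, ⟨x', h2, rfl⟩⟩
  · rintro ⟨h1, x', h2, rfl⟩
    exact ⟨x', ⟨by simpa [SimpleGraph.neighborSet] using h1, h2⟩, rfl⟩

lemma deg_diff {V : Type} [Fintype V] (G : SimpleGraph V) (S : Set V) (v : ↥S) :
    degree' G ↑v - degree' (G.induce S) v = ((G.neighborSet ↑v) \ S).ncard := by
  rw [deg_plain, deg_induce, ← Set.ncard_diff Set.inter_subset_left (Set.toFinite _),
    Set.diff_self_inter]

lemma aux2 {V : Type} [Fintype V] (N X Y₀ : Set V) (h : Y₀ ⊆ Xᶜ) :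
    (N \ (X ∪ Y₀)).ncard = (N ∩ Xᶜ).ncard - (N ∩ Y₀).ncard := by
  have h2 : N ∩ Y₀ ⊆ N ∩ Xᶜ := fun x hx => ⟨hx.1, h hx.2⟩
  rw [← Set.ncard_diff h2 (Set.toFinite _)]
  congr 1
  ext x
  simp only [Set.mem_diff, Set.mem_union, Set.mem_inter_iff, Set.mem_compl_iff]
  tauto

lemma card_split_aux {V : Type} [Fintype V] (N X Y₀ : Set V) (h : Y₀ ⊆ Xᶜ) :
    (N \ X).ncard = (N \ (X ∪ Y₀)).ncard + (N ∩ Y₀).ncard := by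
  have hdisj : Disjoint (N \ (X ∪ Y₀)) (N ∩ Y₀) := by
    rw [Set.disjoint_left]
    rintro x ⟨_, hx⟩ ⟨_, hy⟩
    exact hx (Or.inr hy)
  rw [← Set.ncard_union_eq hdisj (Set.toFinite _) (Set.toFinite _)]
  congr 1
  ext x
  simp only [Set.mem_diff, Set.mem_union, Set.mem_inter_iff]
  constructor
  · rintro ⟨hN, hX⟩
    by_cases hy : x ∈ Y₀
    · exact Or.inr ⟨hN, hy⟩
    · exact Or.inl ⟨hN, fun hc => hc.elim hX hy⟩
  · rintro (⟨hN, hc⟩ | ⟨hN, hy⟩)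
    · exact ⟨hN, fun hx => hc (Or.inl hx)⟩
    · exact ⟨hN, fun hx => h hy hx⟩

/-- If the induced subgraph of `G` on `X` is `r`-correspondence-deletable and
maximal (w.r.t. vertex-set inclusion) among `r`-correspondence-deletable subgraphs of `G`,
then no nonempty induced subgraph of `G − X` is `r`-correspondence-deletable in `G − X`. -/
theorem maximal_deletable {V : Type} [Fintype V] (G : SimpleGraph V) (r : ℕ) (hr : 0 < r)
    (X : Set V) (hX : Deletable G X r)
    (hmax : ∀ X' : Set V, Deletable G X' r → X ⊆ X' → X' = X) :
    ∀ Y : Set ↥(Xᶜ), ¬ Deletable (G.induce Xᶜ) Y r := by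
  classical
  intro Y hY
  obtain ⟨hYne, hYcol⟩ := hY
  set Y₀ : Set V := Subtype.val '' Y with hY₀def
  have hY₀X : Y₀ ⊆ Xᶜ := by rintro _ ⟨a, _, rfl⟩; exact a.2
  set Z : Set V := X ∪ Y₀ with hZdef
  have hXZ : X ⊆ Z := Set.subset_union_left
  have hdel : Deletable G Z r := by
    refine ⟨hX.1.mono hXZ, ?_⟩
    intro C LM hL
    let jz : ↥Y → ↥Z := fun w => ⟨w.1.1, Or.inr ⟨w.1, w.2, rfl⟩⟩
    let iX : ↥X → ↥Z := fun v => ⟨v.1, Or.inl v.2⟩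
    -- the correspondence assignment induced on Y
    let LM_Y : CorrAssignment ((G.induce Xᶜ).induce Y) C :=
      { L := fun w => LM.L (jz w)
        M := fun w w' a b => LM.M (jz w) (jz w') a b
        adj_of_M := fun w w' a b h => by exact LM.adj_of_M _ _ _ _ h
        mem_left := fun w w' a b h => LM.mem_left _ _ _ _ h
        mem_right := fun w w' a b h => LM.mem_right _ _ _ _ h
        symm := fun w w' a b h => LM.symm _ _ _ _ h
        match_right := fun w w' a b b' h h' => LM.match_right _ _ _ _ _ h h'
        match_left := fun w w' a a' b h h' => LM.match_left _ _ _ _ _ h h' }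
    have hboundY : ∀ w : ↥Y,
        r - (degree' (G.induce Xᶜ) ↑w - degree' ((G.induce Xᶜ).induce Y) w)
          ≤ (LM_Y.L w).card := by
      intro w
      have h1 := hL (jz w)
      rw [deg_diff] at h1
      have e0 : ((jz w : ↥Z) : V) = ↑↑w := rfl
      rw [e0] at h1
      rw [deg_induce, deg_induce2, ← hY₀def]
      have haux := aux2 (G.neighborSet ↑↑w) X Y₀ hY₀X
      rw [← hZdef] at haux
      rw [← haux]
      exact h1
    obtain ⟨φY, hφY⟩ := hYcol C LM_Y hboundY
    -- colours on X-vertices that are forbidden by chosen colours on Y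
    let Bad : ↥X → C → Prop := fun v a => ∃ w : ↥Y, LM.M (iX v) (jz w) a (φY w)
    let Lx : ↥X → Finset C := fun v => (LM.L (iX v)).filter (fun a => ¬ Bad v a)
    let LM_X : CorrAssignment (G.induce X) C :=
      { L := Lx
        M := fun v v' a b => LM.M (iX v) (iX v') a b ∧ a ∈ Lx v ∧ b ∈ Lx v'
        adj_of_M := fun v v' a b h => by exact LM.adj_of_M _ _ _ _ h.1
        mem_left := fun v v' a b h => h.2.1
        mem_right := fun v v' a b h => h.2.2
        symm := fun v v' a b h => ⟨LM.symm _ _ _ _ h.1, h.2.2, h.2.1⟩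
        match_right := fun v v' a b b' h h' => LM.match_right _ _ _ _ _ h.1 h'.1
        match_left := fun v v' a a' b h h' => LM.match_left _ _ _ _ _ h.1 h'.1 }
    have hbadle : ∀ v : ↥X, ((LM.L (iX v)).filter (fun a => Bad v a)).card
        ≤ (G.neighborSet ↑v ∩ Y₀).ncard := by
      intro v
      have key : ∀ a ∈ (LM.L (iX v)).filter (fun a => Bad v a), ∃ w : ↥Y,
          LM.M (iX v) (jz w) a (φY w) := fun a ha => (Finset.mem_filter.mp ha).2
      choose f hf using key
      rw [Set.ncard_eq_toFinset_card']
      apply Finset.card_le_card_of_injOn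
        (fun a => if h : a ∈ (LM.L (iX v)).filter (fun a => Bad v a)
          then ((f a h : ↥Y) : ↥Xᶜ).1 else ↑v)
      · intro a ha
        rw [Finset.mem_coe] at ha
        simp only [dif_pos ha, Finset.mem_coe, Set.mem_toFinset]
        have hM := hf a ha
        have hadj : G.Adj ↑v ((f a ha : ↥Y) : ↥Xᶜ).1 := LM.adj_of_M _ _ _ _ hM
        exact ⟨hadj, (f a ha).1, (f a ha).2, rfl⟩
      · intro a ha a' ha' hEq
        simp only [Finset.mem_coe] at ha ha'
        simp only [dif_pos ha, dif_pos ha'] at hEq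
        have hww : f a ha = f a' ha' := Subtype.ext (Subtype.ext hEq)
        have hM := hf a ha
        have hM' := hf a' ha'
        rw [hww] at hM
        exact LM.match_left _ _ _ _ _ hM hM'
    have hboundX : ∀ v : ↥X,
        r - (degree' G ↑v - degree' (G.induce X) v) ≤ (LM_X.L v).card := by
      intro v
      rw [deg_diff]
      have h1 := hL (iX v)
      rw [deg_diff] at h1
      have e0 : ((iX v : ↥Z) : V) = ↑v := rfl
      rw [e0] at h1
      have hsplit := card_split_aux (G.neighborSet ↑v) X Y₀ hY₀X
      rw [← hZdef] at hsplit
      have hfil := Finset.card_filter_add_card_filter_not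
        (s := LM.L (iX v)) (p := fun a => Bad v a)
      have hb := hbadle v
      show r - (G.neighborSet ↑v \ X).ncard
        ≤ ((LM.L (iX v)).filter (fun a => ¬ Bad v a)).card
      omega
    obtain ⟨φX, hφX⟩ := hX.2 C LM_X hboundX
    have hw : ∀ z : ↥Z, z.1 ∉ X → ∃ w : ↥Y, jz w = z := by
      intro z hzX
      rcases z.2 with h | hy
      · exact absurd h hzX
      · obtain ⟨a, ha, hav⟩ := hy
        exact ⟨⟨a, ha⟩, Subtype.ext hav⟩
    refine ⟨fun z => if h : z.1 ∈ X then φX ⟨z.1, h⟩ else φY (hw z h).choose, ?_, ?_⟩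
    · intro z
      by_cases h : z.1 ∈ X
      · simp only [dif_pos h]
        have h1 := hφX.1 ⟨z.1, h⟩
        exact Finset.mem_of_mem_filter _ h1
      · simp only [dif_neg h]
        have hspec : jz (hw z h).choose = z := (hw z h).choose_spec
        have h1 := hφY.1 (hw z h).choose
        have hle : LM.L (jz (hw z h).choose) = LM.L z := congrArg _ hspec
        rw [← hle]
        exact h1
    · intro z z' hadj hM
      have hGadj : G.Adj z.1 z'.1 := hadj
      by_cases h : z.1 ∈ X <;> by_cases h' : z'.1 ∈ X
      · simp only [dif_pos h, dif_pos h'] at hM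
        have hadjX : (G.induce X).Adj ⟨z.1, h⟩ ⟨z'.1, h'⟩ := hGadj
        exact hφX.2 _ _ hadjX ⟨hM, hφX.1 _, hφX.1 _⟩
      · simp only [dif_pos h, dif_neg h'] at hM
        have hspec : jz (hw z' h').choose = z' := (hw z' h').choose_spec
        have hmem := hφX.1 ⟨z.1, h⟩
        have hbad : Bad ⟨z.1, h⟩ (φX ⟨z.1, h⟩) :=
          ⟨(hw z' h').choose, by rw [hspec]; exact hM⟩
        exact (Finset.mem_filter.mp hmem).2 hbad
      · simp only [dif_neg h, dif_pos h'] at hM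
        have hspec : jz (hw z h).choose = z := (hw z h).choose_spec
        have hmem := hφX.1 ⟨z'.1, h'⟩
        have hM2 := LM.symm _ _ _ _ hM
        have hbad : Bad ⟨z'.1, h'⟩ (φX ⟨z'.1, h'⟩) :=
          ⟨(hw z h).choose, by rw [hspec]; exact hM2⟩
        exact (Finset.mem_filter.mp hmem).2 hbad
      · simp only [dif_neg h, dif_neg h'] at hM
        have hspec : jz (hw z h).choose = z := (hw z h).choose_spec
        have hspec' : jz (hw z' h').choose = z' := (hw z' h').choose_spec
        have hadjY : ((G.induce Xᶜ).induce Y).Adj (hw z h).choose (hw z' h').choose := by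
          show G.Adj ((jz (hw z h).choose : ↥Z) : V) ((jz (hw z' h').choose : ↥Z) : V)
          rw [hspec, hspec']
          exact hGadj
        apply hφY.2 _ _ hadjY
        show LM.M (jz (hw z h).choose) (jz (hw z' h').choose) _ _
        rw [hspec, hspec']
        exact hM
  have hZX : Z = X := hmax Z hdel hXZ
  obtain ⟨y, hy⟩ := hYne
  have hyZ : (y : V) ∈ Z := Or.inr ⟨y, hy, rfl⟩
  rw [hZX] at hyZ
  exact y.2 hyZ
end

section
/- Let G be a finite simple graph and S a proper subgraph of G. If there exists a 5-correspondence assignment (L,M) for G such that G is S-critical with respect to (L,M), then G has no 5-correspondence-deletable induced subgraph that is vertex-disjoint from S. -/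
open SimpleGraph

/-- If `S` is a proper subgraph of `G` and there is a 5-correspondence
assignment `(L, M)` for `G` such that `G` is `S`-critical with respect to `(L, M)`, then `G`
has no 5-correspondence-deletable induced subgraph that is vertex-disjoint from `S`. -/
theorem no_deletable_of_critical {V : Type} [Fintype V] (G : SimpleGraph V)
    (S : G.Subgraph) (hS : S ≠ ⊤)
    (h : ∃ (C : Type) (LM : CorrAssignment G C),
      LM.IsKAssignment 5 ∧ IsCriticalWrt LM ⊤ S) :
    ∀ X : Set V, Disjoint X S.verts → ¬ Deletable G X 5 := by
  classical
  rintro X hdisj ⟨hXne, hdel⟩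
  obtain ⟨C, LM, hLM5, -, -, hcrit⟩ := h
  obtain ⟨x0, hx0⟩ := hXne
  have hnotinS : ∀ v ∈ X, v ∉ S.verts := fun v hv => Set.disjoint_left.mp hdisj hv
  -- the subgraph obtained from `G` by deleting `X`
  set G' : G.Subgraph := (⊤ : G.Subgraph).deleteVerts X with hG'def
  have hSG' : S ≤ G' := by
    constructor
    · intro v hv
      exact ⟨trivial, fun hvX => hnotinS v hvX hv⟩
    · intro u v huv
      exact ⟨⟨trivial, fun h' => hnotinS u h' (S.edge_vert huv)⟩,
        ⟨trivial, fun h' => hnotinS v h' (S.edge_vert huv.symm)⟩, S.adj_sub huv⟩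
  have hG'ne : G' ≠ ⊤ := by
    intro hEq
    have hx : x0 ∈ G'.verts := by
      rw [hEq]; trivial
    exact hx.2 hx0
  obtain ⟨φ, hφS, ⟨φ', hφ'col, hφ'agree⟩, hnoext⟩ := hcrit G' hSG' le_top hG'ne
  -- the reduced correspondence assignment on `G.induce X`
  set P : X → C → Prop := fun v b => ∀ u, u ∉ X → ¬ LM.M u ↑v (φ' u) b with hPdef
  set L' : X → Finset C := fun v => (LM.L ↑v).filter (P v) with hL'def
  set LM' : CorrAssignment (G.induce X) C :=
    { L := L'
      M := fun u v a b => LM.M ↑u ↑v a b ∧ a ∈ L' u ∧ b ∈ L' v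
      adj_of_M := fun u v a b hm => LM.adj_of_M ↑u ↑v a b hm.1
      mem_left := fun u v a b hm => hm.2.1
      mem_right := fun u v a b hm => hm.2.2
      symm := fun u v a b hm => ⟨LM.symm _ _ _ _ hm.1, hm.2.2, hm.2.1⟩
      match_right := fun u v a b b' hm hm' => LM.match_right _ _ _ _ _ hm.1 hm'.1
      match_left := fun u v a a' b hm hm' => LM.match_left _ _ _ _ _ hm.1 hm'.1 } with hLM'def
  have hcard : ∀ v : X, 5 - (degree' G ↑v - degree' (G.induce X) v) ≤ (LM'.L v).card := by
    intro v
    set A := G.neighborFinset (↑v : V) with hAdef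
    set Nin := A.filter (· ∈ X) with hNin
    set Nout := A.filter (fun u => ¬ u ∈ X) with hNout
    have hAcard : Nin.card + Nout.card = A.card :=
      Finset.card_filter_add_card_filter_not (fun u => u ∈ X)
    have hdG : degree' G ↑v = A.card := by
      rw [degree', hAdef, SimpleGraph.neighborFinset, Set.toFinset_card,
        Fintype.card_eq_nat_card]
    have hdI : degree' (G.induce X) v ≤ Nin.card := by
      have key : Nat.card ((G.induce X).neighborSet v) ≤ Nat.card {u : V // u ∈ Nin} := by
        refine Nat.card_le_card_of_injective
          (fun u => ⟨↑↑u, ?_⟩) (fun a b hab => ?_)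
        · rw [hNin, Finset.mem_filter]
          refine ⟨?_, (↑u : X).2⟩
          rw [hAdef, SimpleGraph.mem_neighborFinset]
          exact u.2
        · exact Subtype.ext (Subtype.ext (by simpa using congrArg Subtype.val hab))
      rw [Nat.card_eq_finsetCard] at key
      exact key
    set Rem := (LM.L ↑v).filter (fun b => ¬ P v b) with hRemdef
    have hsplit : (L' v).card + Rem.card = (LM.L ↑v).card := by
      rw [hL'def, hRemdef]
      exact Finset.card_filter_add_card_filter_not (P v)
    have hex : ∀ b ∈ Rem, ∃ u, u ∉ X ∧ LM.M u ↑v (φ' u) b := by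
      intro b hb
      rw [hRemdef, Finset.mem_filter] at hb
      have h2 : ¬ ∀ u, u ∉ X → ¬ LM.M u ↑v (φ' u) b := hb.2
      push_neg at h2
      exact h2
    have hV : Nonempty V := ⟨x0⟩
    set g : C → V := fun b => Classical.epsilon (fun u => u ∉ X ∧ LM.M u ↑v (φ' u) b) with hgdef
    have hgspec : ∀ b ∈ Rem, g b ∉ X ∧ LM.M (g b) ↑v (φ' (g b)) b := by
      intro b hb
      exact Classical.epsilon_spec (hex b hb)
    have hRem : Rem.card ≤ Nout.card := by
      refine Finset.card_le_card_of_injOn g (fun b hb => ?_) (fun b hb b' hb' hbb' => ?_)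
      · obtain ⟨hg1, hg2⟩ := hgspec b hb
        rw [hNout, Finset.mem_coe, Finset.mem_filter]
        refine ⟨?_, hg1⟩
        rw [hAdef, SimpleGraph.mem_neighborFinset]
        exact (LM.adj_of_M _ _ _ _ hg2).symm
      · obtain ⟨-, hg2⟩ := hgspec b hb
        obtain ⟨-, hg2'⟩ := hgspec b' hb'
        rw [← hbb'] at hg2'
        exact LM.match_right _ _ _ _ _ hg2 hg2'
    have h5 : 5 ≤ (LM.L ↑v).card := hLM5 ↑v
    have : (LM'.L v).card = (L' v).card := rfl
    rw [this]
    omega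
  obtain ⟨ψ, hψL, hψadj⟩ := hdel C LM' hcard
  have hψL' : ∀ u : X, ψ u ∈ L' u := hψL
  -- the combined colouring
  set φ'' : V → C := fun w => if hw : w ∈ X then ψ ⟨w, hw⟩ else φ' w with hφ''def
  refine hnoext ⟨φ'', ⟨fun w _ => ?_, fun u v huv => ?_⟩, fun w hw => ?_⟩
  · by_cases hwX : w ∈ X
    · have := hψL' ⟨w, hwX⟩
      rw [hL'def, Finset.mem_filter] at this
      simpa [hφ''def, hwX] using this.1
    · have hwv : w ∈ G'.verts := ⟨trivial, hwX⟩
      simpa [hφ''def, hwX] using hφ'col.1 w hwv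
  · have hadj : G.Adj u v := huv.adj_sub
    by_cases huX : u ∈ X <;> by_cases hvX : v ∈ X
    · intro hM
      have hadj' : (G.induce X).Adj ⟨u, huX⟩ ⟨v, hvX⟩ := hadj
      refine hψadj ⟨u, huX⟩ ⟨v, hvX⟩ hadj' ⟨?_, hψL' _, hψL' _⟩
      simpa [hφ''def, huX, hvX] using hM
    · intro hM
      have hM1 : LM.M u v (ψ ⟨u, huX⟩) (φ' v) := by
        simpa [hφ''def, huX, hvX] using hM
      have hM' : LM.M v u (φ' v) (ψ ⟨u, huX⟩) := LM.symm _ _ _ _ hM1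
      have hmem := hψL' ⟨u, huX⟩
      rw [hL'def, Finset.mem_filter] at hmem
      exact hmem.2 v hvX hM'
    · intro hM
      have hM1 : LM.M u v (φ' u) (ψ ⟨v, hvX⟩) := by
        simpa [hφ''def, huX, hvX] using hM
      have hmem := hψL' ⟨v, hvX⟩
      rw [hL'def, Finset.mem_filter] at hmem
      exact hmem.2 u huX hM1
    · have hG'adj : G'.Adj u v := ⟨⟨trivial, huX⟩, ⟨trivial, hvX⟩, hadj⟩
      have := hφ'col.2 u v hG'adj
      simpa [hφ''def, huX, hvX] using this
  · have hwX : w ∉ X := fun h' => hnotinS w h' hw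
    have : φ'' w = φ' w := by simp [hφ''def, hwX]
    rw [this]
    exact hφ'agree w hw
end

section
/- Let F be an arbitrary field, let A₁, A₂, …, Aₙ be nonempty finite subsets of F, let S = Σ_{i=1}^{n} |Aᵢ|, and let t = max_i |Aᵢ|, with t ≥ 2. Let B = A₁ × A₂ × ⋯ × Aₙ, and suppose that P(x₁, …, xₙ) is a polynomial over F in n variables of total degree at most d that does not vanish at all points of B. Then the number of points of B at which P takes a nonzero value is at least t^{(S − n − d)/(t − 1)}. -/
open MvPolynomial Polynomial in
/-- Reduction of a polynomial in `Polynomial (MvPolynomial (Fin n) F)` modulo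
`∏_{a ∈ A0} (X - a)`, preserving total-degree bounds on coefficients and evaluation. -/
theorem af_reduce {F : Type} [Field F] {n : ℕ} (A0 : Finset F) (hA0 : A0.Nonempty) (d : ℕ)
    (q : Polynomial (MvPolynomial (Fin n) F))
    (hq : ∀ k, q.coeff k ≠ 0 → k + (q.coeff k).totalDegree ≤ d) :
    ∃ r : Polynomial (MvPolynomial (Fin n) F), r.natDegree < A0.card ∧
      (∀ k, r.coeff k ≠ 0 → k + (r.coeff k).totalDegree ≤ d) ∧
      (∀ x0 ∈ A0, ∀ x' : Fin n → F,
        Polynomial.eval x0 (r.map (MvPolynomial.eval x')) =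
        Polynomial.eval x0 (q.map (MvPolynomial.eval x'))) := by
  classical
  set a0 := A0.card with ha0
  have ha0pos : 0 < a0 := Finset.card_pos.mpr hA0
  set g : Polynomial F := ∏ a ∈ A0, (Polynomial.X - Polynomial.C a) with hg
  have hgmonic : g.Monic := monic_prod_of_monic _ _ fun a _ => monic_X_sub_C a
  have hgdeg : g.natDegree = a0 := by
    rw [hg, natDegree_prod_of_monic _ _ fun a _ => monic_X_sub_C a]
    simp [ha0]
  set G : Polynomial (MvPolynomial (Fin n) F) :=
    g.map (MvPolynomial.C : F →+* MvPolynomial (Fin n) F) with hG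
  have hGmonic : G.Monic := hgmonic.map _
  have hGdeg : G.natDegree = a0 := by
    rw [hG, hgmonic.natDegree_map, hgdeg]
  have hGeval : ∀ x' : Fin n → F, G.map (MvPolynomial.eval x') = g := by
    intro x'
    rw [hG, Polynomial.map_map]
    have : (MvPolynomial.eval x').comp (MvPolynomial.C) = RingHom.id F := by
      ext a; simp
    rw [this, Polynomial.map_id]
  have hgzero : ∀ x0 ∈ A0, g.eval x0 = 0 := by
    intro x0 hx0
    rw [hg, Polynomial.eval_prod]
    exact Finset.prod_eq_zero hx0 (by simp)
  -- main induction on an upper bound for the degree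
  suffices key : ∀ N : ℕ, ∀ q : Polynomial (MvPolynomial (Fin n) F), q.natDegree ≤ N →
      (∀ k, q.coeff k ≠ 0 → k + (q.coeff k).totalDegree ≤ d) →
      ∃ r : Polynomial (MvPolynomial (Fin n) F), r.natDegree < a0 ∧
        (∀ k, r.coeff k ≠ 0 → k + (r.coeff k).totalDegree ≤ d) ∧
        (∀ x0 ∈ A0, ∀ x' : Fin n → F,
          Polynomial.eval x0 (r.map (MvPolynomial.eval x')) =
          Polynomial.eval x0 (q.map (MvPolynomial.eval x'))) by
    exact key q.natDegree q le_rfl hq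
  intro N
  induction N with
  | zero =>
    intro q hdeg hco
    exact ⟨q, by omega, hco, fun _ _ _ => rfl⟩
  | succ N ih =>
    intro q hdeg hco
    by_cases hlt : q.natDegree < a0
    · exact ⟨q, hlt, hco, fun _ _ _ => rfl⟩
    push_neg at hlt
    set m := q.natDegree with hm
    have hq0 : q ≠ 0 := by
      intro h; rw [h] at hm; simp [natDegree_zero] at hm; omega
    set c := q.leadingCoeff with hc
    have hc0 : c ≠ 0 := leadingCoeff_ne_zero.mpr hq0
    have hcd : m + c.totalDegree ≤ d := hco m (by rwa [← leadingCoeff, ← hc])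
    set T : Polynomial (MvPolynomial (Fin n) F) := Polynomial.C c * (G * Polynomial.X ^ (m - a0)) with hT
    have hTmonicpart : (G * Polynomial.X ^ (m - a0)).Monic := hGmonic.mul (monic_X_pow _)
    have hTdeg : T.natDegree = m := by
      rw [hT, natDegree_C_mul hc0, hGmonic.natDegree_mul (monic_X_pow _), hGdeg,
        natDegree_X_pow]
      omega
    have hTlc : T.leadingCoeff = c := by
      rw [hT, leadingCoeff_mul, leadingCoeff_C, hTmonicpart.leadingCoeff, mul_one]
    have hTco : ∀ k, (T.coeff k).totalDegree ≤ c.totalDegree := by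
      intro k
      rw [hT, Polynomial.coeff_C_mul, hG]
      rw [Polynomial.coeff_mul_X_pow']
      split_ifs with h
      · rw [Polynomial.coeff_map]
        calc (c * MvPolynomial.C (g.coeff (k - (m - a0)))).totalDegree
            ≤ c.totalDegree + (MvPolynomial.C (g.coeff (k - (m - a0))) :
              MvPolynomial (Fin n) F).totalDegree := MvPolynomial.totalDegree_mul _ _
          _ = c.totalDegree := by rw [MvPolynomial.totalDegree_C, add_zero]
      · simp
    set q' := q - T with hq'
    have hdq' : q'.natDegree < m := by
      have hdd : T.degree = q.degree := by
        rw [degree_eq_natDegree hq0, degree_eq_natDegree (by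
          intro h; rw [h] at hTlc; simp at hTlc; exact hc0 hTlc.symm), hTdeg]
      have := degree_sub_lt hdd.symm hq0 (by rw [hTlc])
      by_cases h0 : q' = 0
      · rw [h0]; simpa [natDegree_zero] using lt_of_lt_of_le ha0pos hlt
      · exact natDegree_lt_natDegree h0 this
    have hmd : m ≤ d := le_trans (Nat.le_add_right _ _) hcd
    have hco' : ∀ k, q'.coeff k ≠ 0 → k + (q'.coeff k).totalDegree ≤ d := by
      intro k hk
      have hkm : k < m := lt_of_le_of_lt (le_natDegree_of_ne_zero hk) hdq'
      have h1 : (q'.coeff k).totalDegree ≤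
          max (q.coeff k).totalDegree (T.coeff k).totalDegree := by
        rw [hq', Polynomial.coeff_sub]
        exact MvPolynomial.totalDegree_sub _ _
      have h2 : (q.coeff k).totalDegree ≤ d - k := by
        by_cases hz : q.coeff k = 0
        · rw [hz, MvPolynomial.totalDegree_zero]; omega
        · have := hco k hz; omega
      have h3 : (T.coeff k).totalDegree ≤ d - k :=
        le_trans (hTco k) (by omega)
      have := le_trans h1 (max_le h2 h3)
      omega
    obtain ⟨r, hr1, hr2, hr3⟩ := ih q' (by omega) hco'
    refine ⟨r, hr1, hr2, fun x0 hx0 x' => ?_⟩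
    rw [hr3 x0 hx0 x']
    have : q = q' + T := by rw [hq']; ring
    rw [this, Polynomial.map_add, Polynomial.eval_add]
    have hTeval : Polynomial.eval x0 (T.map (MvPolynomial.eval x')) = 0 := by
      rw [hT, Polynomial.map_mul, Polynomial.map_mul, Polynomial.eval_mul,
        Polynomial.eval_mul, hGeval, hgzero x0 hx0, zero_mul, mul_zero]
    rw [hTeval, add_zero]

theorem af_bern {t m : ℕ} (ht2 : 2 ≤ t) (hm1 : 1 ≤ m) (hmt : m ≤ t) :
    (t : ℝ) ^ (((m : ℝ) - 1) / ((t : ℝ) - 1)) ≤ (m : ℝ) := by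
  have ht1 : (1 : ℝ) < t := by exact_mod_cast ht2
  have htp : (0 : ℝ) < (t : ℝ) - 1 := by linarith
  set p : ℝ := ((m : ℝ) - 1) / ((t : ℝ) - 1) with hp
  have hm1' : (1 : ℝ) ≤ m := by exact_mod_cast hm1
  have hmt' : (m : ℝ) ≤ t := by exact_mod_cast hmt
  have hp0 : 0 ≤ p := div_nonneg (by linarith) htp.le
  have hp1 : p ≤ 1 := by
    rw [div_le_one htp]; linarith
  have key := rpow_one_add_le_one_add_mul_self (s := (t : ℝ) - 1) (by linarith) hp0 hp1
  have h1 : (1 : ℝ) + ((t : ℝ) - 1) = t := by ring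
  rw [h1] at key
  calc (t : ℝ) ^ p ≤ 1 + p * ((t : ℝ) - 1) := key
    _ = m := by rw [hp]; field_simp; ring

open MvPolynomial Classical in
theorem af_main {F : Type} [Field F] (t : ℕ) (ht2 : 2 ≤ t) :
    ∀ (n : ℕ) (A : Fin n → Finset F), (∀ i, (A i).Nonempty) → (∀ i, (A i).card ≤ t) →
    ∀ (d : ℕ) (P : MvPolynomial (Fin n) F), P.totalDegree ≤ d →
    (∃ x ∈ Fintype.piFinset A, MvPolynomial.eval x P ≠ 0) →
    (t : ℝ) ^ (((∑ i, ((A i).card : ℝ)) - n - d) / ((t : ℝ) - 1)) ≤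
      (((Fintype.piFinset A).filter (fun x => MvPolynomial.eval x P ≠ 0)).card : ℝ) := by
  have ht1 : (1 : ℝ) < t := by exact_mod_cast ht2
  have htpos : (0 : ℝ) < t := by linarith
  have htm1 : (0 : ℝ) < (t : ℝ) - 1 := by linarith
  intro n
  induction n with
  | zero =>
    intro A hAne hAcard d P hd hP
    obtain ⟨x, hx, hPx⟩ := hP
    have h1 : 1 ≤ ((Fintype.piFinset A).filter (fun x => MvPolynomial.eval x P ≠ 0)).card :=
      Finset.card_pos.mpr ⟨x, Finset.mem_filter.mpr ⟨hx, hPx⟩⟩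
    have h2 : (t : ℝ) ^ (((∑ i : Fin 0, ((A i).card : ℝ)) - ((0:ℕ):ℝ) - d) / ((t : ℝ) - 1)) ≤ 1 := by
      apply Real.rpow_le_one_of_one_le_of_nonpos ht1.le
      apply div_nonpos_of_nonpos_of_nonneg _ htm1.le
      simp only [Finset.univ_eq_empty, Finset.sum_empty, Nat.cast_zero]
      have : (0:ℝ) ≤ d := Nat.cast_nonneg d
      linarith
    exact h2.trans (by exact_mod_cast h1)
  | succ n ih =>
    intro A hAne hAcard d P hd hP
    set A' : Fin n → Finset F := fun i => A i.succ with hA'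
    set a0 := (A 0).card with ha0
    have ha0pos : 0 < a0 := Finset.card_pos.mpr (hAne 0)
    set q := MvPolynomial.finSuccEquiv F n P with hqdef
    have hqco : ∀ k, q.coeff k ≠ 0 → k + (q.coeff k).totalDegree ≤ d := by
      intro k hk
      have h2 := MvPolynomial.totalDegree_coeff_finSuccEquiv_add_le P k (by rw [← hqdef]; exact hk)
      rw [← hqdef] at h2
      omega
    obtain ⟨r, hrdeg, hrco, hrev⟩ := af_reduce (A 0) (hAne 0) d q hqco
    have keyeval : ∀ x0 ∈ A 0, ∀ x' : Fin n → F,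
        MvPolynomial.eval (Fin.cons x0 x' : Fin (n+1) → F) P =
        Polynomial.eval x0 (r.map (MvPolynomial.eval x')) := by
      intro x0 hx0 x'
      rw [MvPolynomial.eval_eq_eval_mv_eval', hrev x0 hx0 x']
    -- decompose the witness
    obtain ⟨x, hx, hPx⟩ := hP
    have hx0mem : x 0 ∈ A 0 := (Fintype.mem_piFinset.mp hx) 0
    have hxtail : Fin.tail x ∈ Fintype.piFinset A' := by
      rw [Fintype.mem_piFinset]; intro i; exact (Fintype.mem_piFinset.mp hx) i.succ
    have hxw : Polynomial.eval (x 0) (r.map (MvPolynomial.eval (Fin.tail x))) ≠ 0 := by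
      rw [← keyeval (x 0) hx0mem (Fin.tail x), Fin.cons_self_tail]; exact hPx
    -- the set of exponents whose coefficient does not vanish on the subgrid
    set K := (Finset.range (r.natDegree + 1)).filter
      (fun k => ∃ x' ∈ Fintype.piFinset A', MvPolynomial.eval x' (r.coeff k) ≠ 0) with hK
    have hKne : K.Nonempty := by
      have hu0 : r.map (MvPolynomial.eval (Fin.tail x)) ≠ 0 := by
        intro h; rw [h] at hxw; simp at hxw
      obtain ⟨k, hk⟩ : ∃ k, (r.map (MvPolynomial.eval (Fin.tail x))).coeff k ≠ 0 := by
        by_contra h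
        push_neg at h
        exact hu0 (Polynomial.ext fun k => by simp [h k])
      rw [Polynomial.coeff_map] at hk
      have hrk : r.coeff k ≠ 0 := by intro h; rw [h] at hk; simp at hk
      exact ⟨k, Finset.mem_filter.mpr ⟨Finset.mem_range.mpr
        (Nat.lt_succ_of_le (Polynomial.le_natDegree_of_ne_zero hrk)),
        ⟨Fin.tail x, hxtail, hk⟩⟩⟩
    have hk0mem := Finset.mem_filter.mp (K.max'_mem hKne)
    obtain ⟨hk0rang, x'w, hx'w, hcw⟩ := hk0mem
    have hk0lt := Finset.mem_range.mp hk0rang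
    set k0 := K.max' hKne with hk0def
    have hk0a0 : k0 < a0 := by omega
    set c := r.coeff k0 with hcdef
    have hc0 : c ≠ 0 := fun h => hcw (by rw [h]; simp)
    have hk0d : k0 + c.totalDegree ≤ d := hrco k0 hc0
    set d' := d - k0 with hd'
    have hcd' : c.totalDegree ≤ d' := by omega
    -- vanishing of higher coefficients on the subgrid
    have hhigh : ∀ k, k0 < k → ∀ x' ∈ Fintype.piFinset A',
        MvPolynomial.eval x' (r.coeff k) = 0 := by
      intro k hk x' hx'
      by_cases hkd : k ≤ r.natDegree
      · by_contra hne
        have : k ∈ K := Finset.mem_filter.mpr ⟨Finset.mem_range.mpr (Nat.lt_succ_of_le hkd),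
          ⟨x', hx', hne⟩⟩
        exact absurd (K.le_max' k this) (by omega)
      · rw [Polynomial.coeff_eq_zero_of_natDegree_lt (by omega)]; simp
    -- apply the inductive hypothesis to c
    have hTbound := ih A' (fun i => hAne i.succ) (fun i => hAcard i.succ) d' c hcd'
      ⟨x'w, hx'w, hcw⟩
    set T := (Fintype.piFinset A').filter (fun x' => MvPolynomial.eval x' c ≠ 0) with hT
    -- per-fibre count
    have hfib : ∀ x' ∈ T, a0 - k0 ≤
        ((A 0).filter (fun x0 => MvPolynomial.eval (Fin.cons x0 x' : Fin (n+1) → F) P ≠ 0)).card := by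
      intro x' hx'T
      rw [hT, Finset.mem_filter] at hx'T
      obtain ⟨hx'mem, hx'c⟩ := hx'T
      set u := r.map (MvPolynomial.eval x') with hu
      have huk0 : u.coeff k0 ≠ 0 := by rw [hu, Polynomial.coeff_map]; exact hx'c
      have hu0 : u ≠ 0 := fun h => huk0 (by rw [h]; simp)
      have huhi : ∀ k, k0 < k → u.coeff k = 0 := by
        intro k hk; rw [hu, Polynomial.coeff_map]; exact hhigh k hk x' hx'mem
      have hudeg : u.natDegree ≤ k0 := Polynomial.natDegree_le_iff_coeff_eq_zero.mpr
        (fun N hN => huhi N hN)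
      have hroots : ((A 0).filter (fun x0 => Polynomial.eval x0 u = 0)).card ≤ k0 := by
        have hsub : (A 0).filter (fun x0 => Polynomial.eval x0 u = 0) ⊆ u.roots.toFinset := by
          intro a ha
          rw [Multiset.mem_toFinset, Polynomial.mem_roots hu0]
          exact (Finset.mem_filter.mp ha).2
        calc ((A 0).filter (fun x0 => Polynomial.eval x0 u = 0)).card
            ≤ u.roots.toFinset.card := Finset.card_le_card hsub
          _ ≤ Multiset.card u.roots := Multiset.toFinset_card_le _
          _ ≤ u.natDegree := Polynomial.card_roots' u
          _ ≤ k0 := hudeg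
      have hsplit := Finset.card_filter_add_card_filter_not
        (s := A 0) (p := fun x0 => Polynomial.eval x0 u = 0)
      have heq : (A 0).filter (fun x0 => MvPolynomial.eval (Fin.cons x0 x' : Fin (n+1) → F) P ≠ 0)
          = (A 0).filter (fun x0 => ¬ Polynomial.eval x0 u = 0) := by
        apply Finset.filter_congr
        intro x0 hx0
        rw [keyeval x0 hx0 x', hu]
      rw [heq]
      omega
    -- assemble points via Fin.cons
    set bigS := T.biUnion (fun x' =>
      ((A 0).filter (fun x0 => MvPolynomial.eval (Fin.cons x0 x' : Fin (n+1) → F) P ≠ 0)).image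
        (fun x0 => (Fin.cons x0 x' : Fin (n+1) → F))) with hbigS
    have hdisj : ∀ x1 ∈ T, ∀ x2 ∈ T, x1 ≠ x2 → Disjoint
        (((A 0).filter (fun x0 => MvPolynomial.eval (Fin.cons x0 x1 : Fin (n+1) → F) P ≠ 0)).image
          (fun x0 => (Fin.cons x0 x1 : Fin (n+1) → F)))
        (((A 0).filter (fun x0 => MvPolynomial.eval (Fin.cons x0 x2 : Fin (n+1) → F) P ≠ 0)).image
          (fun x0 => (Fin.cons x0 x2 : Fin (n+1) → F))) := by
      intro x1 _ x2 _ hne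
      rw [Finset.disjoint_left]
      intro a ha1 ha2
      obtain ⟨b1, _, hb1⟩ := Finset.mem_image.mp ha1
      obtain ⟨b2, _, hb2⟩ := Finset.mem_image.mp ha2
      apply hne
      have : Fin.tail (Fin.cons b1 x1 : Fin (n+1) → F) =
          Fin.tail (Fin.cons b2 x2 : Fin (n+1) → F) := by rw [hb1, hb2]
      simpa [Fin.tail_cons] using this
    have hcardS : bigS.card = ∑ x' ∈ T,
        ((A 0).filter (fun x0 => MvPolynomial.eval (Fin.cons x0 x' : Fin (n+1) → F) P ≠ 0)).card := by
      rw [hbigS, Finset.card_biUnion hdisj]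
      apply Finset.sum_congr rfl
      intro x' _
      apply Finset.card_image_of_injective
      intro a b hab
      have := congrFun hab 0
      simpa using this
    have hSsub : bigS ⊆ (Fintype.piFinset A).filter (fun x => MvPolynomial.eval x P ≠ 0) := by
      intro a ha
      rw [hbigS, Finset.mem_biUnion] at ha
      obtain ⟨x', hx'T, ha⟩ := ha
      obtain ⟨x0, hx0, rfl⟩ := Finset.mem_image.mp ha
      rw [Finset.mem_filter] at hx0 ⊢
      refine ⟨Fintype.mem_piFinset.mpr (fun i => ?_), hx0.2⟩
      induction i using Fin.cases with
      | zero => simpa using hx0.1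
      | succ i => simpa using (Fintype.mem_piFinset.mp ((Finset.mem_filter.mp hx'T).1)) i
    have hcount : (a0 - k0) * T.card ≤
        ((Fintype.piFinset A).filter (fun x => MvPolynomial.eval x P ≠ 0)).card := by
      calc (a0 - k0) * T.card = ∑ _x' ∈ T, (a0 - k0) := by
            rw [Finset.sum_const, smul_eq_mul, mul_comm]
        _ ≤ ∑ x' ∈ T, ((A 0).filter
              (fun x0 => MvPolynomial.eval (Fin.cons x0 x' : Fin (n+1) → F) P ≠ 0)).card :=
            Finset.sum_le_sum hfib
        _ = bigS.card := hcardS.symm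
        _ ≤ _ := Finset.card_le_card hSsub
    -- real arithmetic
    set m := a0 - k0 with hm
    have hm1 : 1 ≤ m := by omega
    have hmt : m ≤ t := by have := hAcard 0; omega
    have hbern := af_bern ht2 hm1 hmt
    have hk0d' : k0 ≤ d := by omega
    have hsum : (∑ i : Fin (n+1), ((A i).card : ℝ)) =
        (a0 : ℝ) + ∑ i : Fin n, ((A' i).card : ℝ) := by
      rw [Fin.sum_univ_succ]
    set S' : ℝ := ∑ i : Fin n, ((A' i).card : ℝ) with hS'
    have hexp : ((∑ i : Fin (n+1), ((A i).card : ℝ)) - (n+1) - d) / ((t : ℝ) - 1) =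
        ((m : ℝ) - 1) / ((t : ℝ) - 1) + (S' - n - d') / ((t : ℝ) - 1) := by
      rw [hsum]
      have hmr : (m : ℝ) = (a0 : ℝ) - k0 := by
        rw [hm]; push_cast [Nat.cast_sub (le_of_lt hk0a0)]; ring
      have hdr : (d' : ℝ) = (d : ℝ) - k0 := by
        rw [hd']; push_cast [Nat.cast_sub hk0d']; ring
      rw [hmr, hdr]
      ring
    push_cast
    rw [hexp, Real.rpow_add htpos]
    have hTnn : (0 : ℝ) ≤ (t : ℝ) ^ ((S' - n - d') / ((t : ℝ) - 1)) :=
      Real.rpow_nonneg htpos.le _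
    calc (t : ℝ) ^ (((m : ℝ) - 1) / ((t : ℝ) - 1)) * (t : ℝ) ^ ((S' - n - d') / ((t : ℝ) - 1))
        ≤ (m : ℝ) * (t : ℝ) ^ ((S' - n - d') / ((t : ℝ) - 1)) :=
          mul_le_mul_of_nonneg_right hbern hTnn
      _ ≤ (m : ℝ) * T.card := by
          apply mul_le_mul_of_nonneg_left _ (by positivity)
          exact hTbound
      _ = ((m * T.card : ℕ) : ℝ) := by push_cast; ring
      _ ≤ _ := by exact_mod_cast hcount

/-- **Alon–Füredi.** Let `F` be a field, `A₁, …, Aₙ` nonempty finite subsets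
of `F`, `S = Σ|Aᵢ|`, `t = max|Aᵢ| ≥ 2`, and `P` a polynomial over `F` in `n` variables of
total degree at most `d` that does not vanish on all of `B = A₁ × ⋯ × Aₙ`. Then the number
of points of `B` at which `P` is nonzero is at least `t^((S − n − d)/(t − 1))`. -/
theorem alon_furedi {F : Type} [Field F] (n : ℕ) (A : Fin n → Finset F)
    (hA : ∀ i, (A i).Nonempty)
    (S t : ℕ) (hS : S = ∑ i, (A i).card)
    (ht : t = Finset.univ.sup fun i => (A i).card) (ht2 : 2 ≤ t)
    (P : MvPolynomial (Fin n) F) (d : ℕ) (hd : P.totalDegree ≤ d)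
    (hP : ∃ x : Fin n → F, (∀ i, x i ∈ A i) ∧ MvPolynomial.eval x P ≠ 0) :
    (t : ℝ) ^ (((S : ℝ) - n - d) / ((t : ℝ) - 1)) ≤
      Nat.card {x : Fin n → F // (∀ i, x i ∈ A i) ∧ MvPolynomial.eval x P ≠ 0} := by
  classical
  have hcard : ∀ i, (A i).card ≤ t := fun i =>
    ht ▸ Finset.le_sup (f := fun i => (A i).card) (Finset.mem_univ i)
  have hP' : ∃ x ∈ Fintype.piFinset A, MvPolynomial.eval x P ≠ 0 := by
    obtain ⟨x, hx, hPx⟩ := hP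
    exact ⟨x, Fintype.mem_piFinset.mpr hx, hPx⟩
  have hmain := af_main t ht2 n A hA hcard d P hd hP'
  have hScast : (S : ℝ) = ∑ i, ((A i).card : ℝ) := by rw [hS]; push_cast [Nat.cast_sum]; rfl
  have hcardeq : Nat.card {x : Fin n → F // (∀ i, x i ∈ A i) ∧ MvPolynomial.eval x P ≠ 0}
      = ((Fintype.piFinset A).filter (fun x => MvPolynomial.eval x P ≠ 0)).card := by
    have e : {x : Fin n → F // (∀ i, x i ∈ A i) ∧ MvPolynomial.eval x P ≠ 0} ≃
        {x : Fin n → F // x ∈ (Fintype.piFinset A).filter (fun x => MvPolynomial.eval x P ≠ 0)} :=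
      Equiv.subtypeEquivRight (fun x => by
        simp [Finset.mem_filter, Fintype.mem_piFinset])
    rw [Nat.card_congr e]
    exact Nat.card_eq_finsetCard _
  rw [hcardeq, hScast]
  exact hmain
end

section
/- Let G be a forest with n ≥ 1 vertices and let L be a list assignment for G with |L(v)| ≥ 3 for every vertex v. Then G has at least 3^{(n+1)/2} distinct L-colourings. -/
/-!
Colour the forest one vertex at a time, always removing a vertex with at most one neighbour
(an end of a longest path). Such a vertex has at least `3 - 1 = 2` colours left whatever the
colouring of the rest, and the last vertex has at least `3`; so there are at least
`3 * 2 ^ (n - 1)` colourings, and `3 ^ ((n + 1) / 2) = 3 * √3 ^ (n - 1)` is smaller.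
-/

open SimpleGraph

variable {V C : Type*}

namespace SimpleGraph

theorem IsAcyclic.exists_neighborSet_subsingleton [Finite V] [Nonempty V] {G : SimpleGraph V}
    (hG : G.IsAcyclic) : ∃ v, (G.neighborSet v).Subsingleton := by
  obtain ⟨u, v, p, hp, hmax⟩ := Walk.exists_isPath_forall_isPath_length_le_length G
  -- A neighbour of `u` off the longest path `p` would extend it.
  have hsnd : ∀ w ∈ G.neighborSet u, w = p.snd := fun w hadj ↦ by
    refine hG.eq_snd_of_adj_start hp hadj (not_not.mp fun hw ↦ ?_)
    have := hmax _ _ _ (hp.cons (h := G.adj_symm hadj) hw)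
    simp at this
  exact ⟨u, fun w₁ h₁ w₂ h₂ ↦ (hsnd w₁ h₁).trans (hsnd w₂ h₂).symm⟩

end SimpleGraph

abbrev ListColouring (G : SimpleGraph V) (L : V → Finset C) : Type _ :=
  {φ : V → C // (∀ v, φ v ∈ L v) ∧ ∀ u w, G.Adj u w → φ u ≠ φ w}

namespace ListColouring

variable {G : SimpleGraph V} {L : V → Finset C}

instance [Finite V] : Finite (ListColouring G L) :=
  Finite.of_injective (fun φ v ↦ (⟨φ.1 v, φ.2.1 v⟩ : L v)) fun _ _ h ↦
    Subtype.ext <| funext fun v ↦ congrArg Subtype.val (congrFun h v)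

theorem card_eq_one_of_isEmpty [IsEmpty V] : Nat.card (ListColouring G L) = 1 :=
  Nat.card_eq_one_iff_unique.mpr
    ⟨⟨fun _ _ ↦ Subtype.ext (funext isEmptyElim)⟩,
      ⟨⟨isEmptyElim, isEmptyElim, fun u ↦ isEmptyElim u⟩⟩⟩

def freeColours (v : V) (ψ : ListColouring (G.induce {v}ᶜ) (L ·)) : Set C :=
  {c | c ∈ L v ∧ ∀ w : ({v}ᶜ : Set V), G.Adj v w → ψ.1 w ≠ c}

instance (v : V) (ψ : ListColouring (G.induce {v}ᶜ) (L ·)) : Finite (freeColours v ψ) :=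
  ((L v).finite_toSet.subset fun _ hc ↦ hc.1).to_subtype

theorem card_sub_ncard_le_ncard_freeColours [Finite V] (v : V)
    (ψ : ListColouring (G.induce {v}ᶜ) (L ·)) :
    (L v).card - (G.neighborSet v).ncard ≤ (freeColours v ψ).ncard := by
  have hcover :
      (L v : Set C) ⊆ freeColours v ψ ∪ ψ.1 '' (Subtype.val ⁻¹' G.neighborSet v) := by
    intro c hc
    by_cases hfree : ∀ w : ({v}ᶜ : Set V), G.Adj v w → ψ.1 w ≠ c
    · exact Or.inl ⟨hc, hfree⟩
    · push Not at hfree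
      obtain ⟨w, hw, rfl⟩ := hfree
      exact Or.inr ⟨w, hw, rfl⟩
  have hN : (Subtype.val ⁻¹' G.neighborSet v : Set ({v}ᶜ : Set V)).ncard =
      (G.neighborSet v).ncard :=
    Set.ncard_preimage_of_injective_subset_range Subtype.val_injective fun w hw ↦
      ⟨⟨w, (G.ne_of_adj hw).symm⟩, rfl⟩
  have := Set.ncard_le_ncard hcover (Set.toFinite _)
  have := Set.ncard_union_le (freeColours v ψ) (ψ.1 '' (Subtype.val ⁻¹' G.neighborSet v))
  have := Set.ncard_image_le (f := ψ.1) (s := Subtype.val ⁻¹' G.neighborSet v) (Set.toFinite _)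
  rw [Set.ncard_coe_finset] at *
  omega

def extend [DecidableEq V] (v : V)
    (p : Σ ψ : ListColouring (G.induce {v}ᶜ) (L ·), freeColours v ψ) : ListColouring G L where
  val w := if h : w = v then p.2 else p.1.1 ⟨w, h⟩
  property := by
    obtain ⟨ψ, c⟩ := p
    refine ⟨fun w ↦ ?_, fun u w huw ↦ ?_⟩
    · by_cases h : w = v
      · subst h; simpa using c.2.1
      · simpa [h] using ψ.2.1 ⟨w, h⟩
    · by_cases hu : u = v <;> by_cases hw : w = v
      · subst hu hw; exact (G.irrefl huw).elim
      · subst hu; simpa [hw] using (c.2.2 ⟨w, hw⟩ huw).symm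
      · subst hw; simpa [hu] using c.2.2 ⟨u, hu⟩ huw.symm
      · simpa [hu, hw] using ψ.2.2 ⟨u, hu⟩ ⟨w, hw⟩ huw

theorem extend_injective [DecidableEq V] (v : V) :
    Function.Injective (extend (G := G) (L := L) v) := by
  rintro ⟨ψ₁, c₁⟩ ⟨ψ₂, c₂⟩ h
  have h := congrArg Subtype.val h
  obtain rfl : ψ₁ = ψ₂ := Subtype.ext <| funext fun w ↦ by
    simpa [extend, show (w : V) ≠ v from w.2] using congrFun h w
  obtain rfl : c₁ = c₂ := Subtype.ext <| by simpa [extend] using congrFun h v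
  rfl

theorem card_sub_ncard_mul_card_induce_le [Finite V] (v : V) :
    ((L v).card - (G.neighborSet v).ncard) * Nat.card (ListColouring (G.induce {v}ᶜ) (L ·)) ≤
      Nat.card (ListColouring G L) := by
  classical
  have := Fintype.ofFinite (ListColouring (G.induce {v}ᶜ) (L ·))
  calc _ = ∑ ψ : ListColouring (G.induce {v}ᶜ) (L ·),
          ((L v).card - (G.neighborSet v).ncard) := by
        simp [Nat.card_eq_fintype_card, mul_comm]
    _ ≤ ∑ ψ, Nat.card (freeColours v ψ) := Finset.sum_le_sum fun ψ _ ↦ by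
        rw [Nat.card_coe_set_eq]; exact card_sub_ncard_le_ncard_freeColours v ψ
    _ = Nat.card (Σ ψ, freeColours v ψ) := by rw [Nat.card_sigma]
    _ ≤ _ := Nat.card_le_card_of_injective _ (extend_injective v)

end ListColouring

theorem SimpleGraph.IsAcyclic.three_mul_two_pow_le_card_listColouring [Finite V]
    {G : SimpleGraph V} (hG : G.IsAcyclic) {L : V → Finset C} (hL : ∀ v, 3 ≤ (L v).card)
    {n : ℕ} (hn : Nat.card V = n + 1) : 3 * 2 ^ n ≤ Nat.card (ListColouring G L) := by
  induction n using Nat.strong_induction_on generalizing V with | _ n ih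
  have : Nonempty V := Nat.card_pos_iff.mp (by omega) |>.1
  obtain ⟨v, hv⟩ := hG.exists_neighborSet_subsingleton
  have hcard : Nat.card ({v}ᶜ : Set V) = n := by
    have := Set.ncard_add_ncard_compl {v}
    rw [Set.ncard_singleton] at this
    rw [Nat.card_coe_set_eq]
    omega
  have hdeg : (G.neighborSet v).ncard ≤ min 1 n := by
    refine le_min (Set.ncard_le_one_iff_subsingleton.mpr hv) ?_
    rw [← hcard, Nat.card_coe_set_eq]
    exact Set.ncard_le_ncard fun w hw ↦ (G.ne_of_adj hw).symm
  have hstep := ListColouring.card_sub_ncard_mul_card_induce_le (G := G) (L := L) v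
  have hLv := hL v
  rcases n with _ | n
  · have : IsEmpty ({v}ᶜ : Set V) := Finite.card_eq_zero_iff.mp hcard
    rw [ListColouring.card_eq_one_of_isEmpty] at hstep
    omega
  · have hrest := ih n (by omega) (hG.induce _) (fun w ↦ hL w) hcard
    calc 3 * 2 ^ (n + 1) = 2 * (3 * 2 ^ n) := by ring
      _ ≤ ((L v).card - (G.neighborSet v).ncard) * _ := by gcongr; omega
      _ ≤ _ := hstep

theorem three_rpow_le_three_mul_two_pow (n : ℕ) : (3 : ℝ) ^ (((n : ℝ) + 2) / 2) ≤ 3 * 2 ^ n :=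
  calc (3 : ℝ) ^ (((n : ℝ) + 2) / 2) = 3 * √3 ^ n := by
        rw [show ((n : ℝ) + 2) / 2 = 1 + 1 / 2 * n by ring, Real.rpow_add (by norm_num),
          Real.rpow_one, Real.rpow_mul (by norm_num), ← Real.sqrt_eq_rpow, Real.rpow_natCast]
    _ ≤ 3 * 2 ^ n := by gcongr; exact Real.sqrt_le_iff.mpr ⟨by norm_num, by norm_num⟩

/-- A forest `G` on `n ≥ 1` vertices with a list assignment `L` satisfying
`|L(v)| ≥ 3` for every vertex has at least `3^((n+1)/2)` distinct `L`-colourings. -/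
theorem forest_many_list_colourings {V C : Type} [Fintype V] (G : SimpleGraph V)
    (hG : G.IsAcyclic) (hn : 1 ≤ Fintype.card V)
    (L : V → Finset C) (hL : ∀ v, 3 ≤ (L v).card) :
    (3 : ℝ) ^ (((Fintype.card V : ℝ) + 1) / 2) ≤
      Nat.card {φ : V → C // (∀ v, φ v ∈ L v) ∧ ∀ u w, G.Adj u w → φ u ≠ φ w} := by
  obtain ⟨n, hcard⟩ : ∃ n, Fintype.card V = n + 1 := ⟨_, (Nat.succ_pred_eq_of_pos hn).symm⟩
  calc (3 : ℝ) ^ (((Fintype.card V : ℝ) + 1) / 2) = 3 ^ (((n : ℝ) + 2) / 2) := by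
        rw [hcard]; push_cast; ring_nf
    _ ≤ 3 * 2 ^ n := three_rpow_le_three_mul_two_pow n
    _ ≤ _ := by
        exact_mod_cast hG.three_mul_two_pow_le_card_listColouring hL
          (by rw [Nat.card_eq_fintype_card, hcard])
end
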